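/- Let F be a field and n ≤ p be positive integers with p ≥ 2. Let α : Mat_{n,p}(F) → F be an affine map (i.e., α(M) = ℓ(M) + c for some linear form ℓ and constant c) such that α(M) = 0 for every matrix M of rank n. Then α is identically zero. -/

import Mathlib

/-!
Let `E_σ` be the matrix whose rows are the standard basis vectors `e_{σ 0}, …, e_{σ (n-1)}` of
`F^p`, for an injection `σ`. It has full rank, and so does `E_σ + a • E_{ij}` whenever `σ i ≠ j`:
if `N` is a right inverse of `E_σ` with `N j i = 0`, then `N - a • N E_{ij} N` is a right inverse of
the perturbed matrix. Since `p ≥ 2`, `σ` can be chosen with `σ i ≠ j` for any prescribed `i, j`, so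
subtracting the two vanishing values gives `ℓ (a • E_{ij}) = 0`. Hence `ℓ = 0`, and then `c = 0`.
-/

open Matrix

theorem Function.Embedding.exists_apply_ne {α β : Type*} [Nontrivial β] (f : α ↪ β) (a : α)
    (b : β) : ∃ g : α ↪ β, g a ≠ b := by
  classical
  obtain ⟨b', hb'⟩ := exists_ne b
  exact ⟨f.trans (Equiv.swap (f a) b').toEmbedding, by simpa using hb'⟩

namespace Matrix

variable {m k R : Type*} [DecidableEq m]

theorem rank_eq_card_height_of_mul_eq_one [Fintype m] [Fintype k] [CommRing R]
    [StrongRankCondition R]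
    {M : Matrix m k R} {N : Matrix k m R} (h : M * N = 1) : M.rank = Fintype.card m :=
  le_antisymm M.rank_le_card_height (by simpa [h] using M.rank_mul_le_left N)

theorem mul_sub_mul_single_mul_eq_one [Fintype m] [Fintype k] [Ring R] [DecidableEq k]
    {M : Matrix m k R} {N : Matrix k m R} (h : M * N = 1) {i : m} {j : k} (hji : N j i = 0)
    (a : R) : (M + single i j a) * (N - N * single i j a * N) = 1 := by
  have hsq : single i j a * N * single i j a = 0 := by
    rw [single_mul_mul_single, hji, mul_zero, zero_mul, single_zero]
  rw [Matrix.add_mul, Matrix.mul_sub, Matrix.mul_sub, ← Matrix.mul_assoc, ← Matrix.mul_assoc, h,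
    Matrix.one_mul, ← Matrix.mul_assoc, ← Matrix.mul_assoc, hsq, Matrix.zero_mul]
  abel

theorem submatrix_one_mul_transpose [Fintype k] [DecidableEq k] [Semiring R] (σ : m ↪ k) :
    (1 : Matrix k k R).submatrix σ id * ((1 : Matrix k k R).submatrix σ id)ᵀ = 1 := by
  rw [transpose_submatrix, transpose_one, ← submatrix_mul _ _ _ _ _ Function.bijective_id,
    Matrix.one_mul, submatrix_one_embedding]

section FullRank

variable [Fintype m] [Fintype k] [DecidableEq k] [CommRing R] [StrongRankCondition R]

theorem rank_submatrix_one_embedding (σ : m ↪ k) :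
    ((1 : Matrix k k R).submatrix σ id).rank = Fintype.card m :=
  rank_eq_card_height_of_mul_eq_one (submatrix_one_mul_transpose σ)

theorem rank_submatrix_one_embedding_add_single {σ : m ↪ k} {i : m} {j : k} (hσ : σ i ≠ j)
    (a : R) : ((1 : Matrix k k R).submatrix σ id + single i j a).rank = Fintype.card m := by
  refine rank_eq_card_height_of_mul_eq_one
    (mul_sub_mul_single_mul_eq_one (submatrix_one_mul_transpose σ) ?_ a)
  exact one_apply_ne hσ

theorem linearMap_add_const_eq_zero_of_forall_rank_eq [Nontrivial k]
    (hmk : Fintype.card m ≤ Fintype.card k) (ℓ : Matrix m k R →ₗ[R] R) (c : R)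
    (hvan : ∀ M : Matrix m k R, M.rank = Fintype.card m → ℓ M + c = 0) (M : Matrix m k R) :
    ℓ M + c = 0 := by
  obtain ⟨σ₀⟩ := Function.Embedding.nonempty_of_card_le hmk
  have hsingle (i : m) (j : k) (a : R) : ℓ (single i j a) = 0 := by
    obtain ⟨σ, hσ⟩ := σ₀.exists_apply_ne i j
    have h₁ := hvan _ (rank_submatrix_one_embedding_add_single hσ a)
    have h₀ := hvan _ (rank_submatrix_one_embedding (R := R) σ)
    rw [map_add] at h₁
    linear_combination h₁ - h₀
  have hℓ : ℓ = 0 :=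
    ext_linearMap R fun i j => LinearMap.ext fun a => by simpa using hsingle i j a
  have hc : c = 0 := by
    simpa [hℓ] using hvan _ (rank_submatrix_one_embedding (R := R) σ₀)
  simp [hℓ, hc]

end FullRank

end Matrix

theorem affine_map_vanishing_on_full_rank_general (F : Type*) [Field F]
    (n p : ℕ) (hnp : n ≤ p) (hp : 2 ≤ p)
    (ℓ : Matrix (Fin n) (Fin p) F →ₗ[F] F) (c : F)
    (hvan : ∀ M : Matrix (Fin n) (Fin p) F, M.rank = n → ℓ M + c = 0) :
    ∀ M : Matrix (Fin n) (Fin p) F, ℓ M + c = 0 := by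
  have : Nontrivial (Fin p) := Fin.nontrivial_iff_two_le.mpr hp
  exact linearMap_add_const_eq_zero_of_forall_rank_eq (by simpa using hnp) ℓ c
    (by simpa using hvan)

/-- For `0 < n ≤ p` with `p ≥ 2`, an affine map `α : Mat_{n,p}(F) → F` (written
`M ↦ ℓ(M) + c` with `ℓ` linear and `c` constant) that vanishes at every matrix of
rank `n` vanishes identically. -/
theorem affine_map_vanishing_on_full_rank (F : Type*) [Field F]
    (n p : ℕ) (hn : 0 < n) (hnp : n ≤ p) (hp : 2 ≤ p)
    (ℓ : Matrix (Fin n) (Fin p) F →ₗ[F] F) (c : F)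
    (hvan : ∀ M : Matrix (Fin n) (Fin p) F, M.rank = n → ℓ M + c = 0) :
    ∀ M : Matrix (Fin n) (Fin p) F, ℓ M + c = 0 :=
  affine_map_vanishing_on_full_rank_general F n p hnp hp ℓ c hvan
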